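/- Suppose n ≥ 3 and π is a Fishburn permutation of length n avoiding both 321 and 3124 which contains the pattern 312. Then π has a descent, and the left entry of the rightmost descent of π equals n. -/

import Mathlib

/-!
Let `j` be the rightmost descent of `π` (there is one, as a copy of `312` is not increasing)
and `p` the position of the maximum `n`. If `p < j`, then `n π_j π_{j+1}` is a copy of `321`.
If `p > j`, then `p` is not a descent, so `n` is the last entry and extends any copy of `312`
to a copy of `3124`. Hence `p = j`.
-/

/-- Two lists of naturals have the same length and the same relative order
(including ties). -/
def SameRelOrder (u v : List ℕ) : Prop :=
  u.length = v.length ∧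
    ∀ i j, i < u.length → j < u.length →
      (u.getD i 0 < u.getD j 0 ↔ v.getD i 0 < v.getD j 0)

/-- `α` contains `β` as a pattern: some subsequence of `α` has the same length
and relative order as `β`. -/
def SeqContains (α β : List ℕ) : Prop :=
  ∃ γ : List ℕ, γ.Sublist α ∧ SameRelOrder γ β

/-- A copy of the Fishburn pattern `f` in `l`: indices `j`, `k` with `j + 1 < k`,
`l j = l k + 1` and `l (j+1) > l j`. -/
def HasFishburnCopy (l : List ℕ) : Prop :=
  ∃ j k, j + 1 < k ∧ k < l.length ∧
    l.getD j 0 = l.getD k 0 + 1 ∧ l.getD j 0 < l.getD (j + 1) 0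

/-- A Fishburn permutation contains no copy of the Fishburn pattern `f`. -/
def FishburnFree (l : List ℕ) : Prop := ¬ HasFishburnCopy l

/-- `l` is a permutation of `1, …, n`, written in one-line notation. -/
def IsPermList (n : ℕ) (l : List ℕ) : Prop := l.Perm (List.range' 1 n)

/-- The set of Fishburn permutations of length `n` avoiding each pattern in `pats`. -/
def FishburnSet (n : ℕ) (pats : List (List ℕ)) : Set (List ℕ) :=
  {l | IsPermList n l ∧ FishburnFree l ∧ ∀ p ∈ pats, ¬ SeqContains l p}

/-- The set of all permutations of length `n` avoiding each pattern in `pats`. -/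
def PermSet (n : ℕ) (pats : List (List ℕ)) : Set (List ℕ) :=
  {l | IsPermList n l ∧ ∀ p ∈ pats, ¬ SeqContains l p}

/-- The number of ascents of a sequence. -/
def ascCount (l : List ℕ) : ℕ :=
  ((Finset.range l.length).filter
    (fun i => i + 1 < l.length ∧ l.getD i 0 < l.getD (i + 1) 0)).card

/-- `l` is an ascent sequence. -/
def IsAscentSeq (l : List ℕ) : Prop :=
  (0 < l.length → l.getD 0 0 = 0) ∧
    ∀ j, 0 < j → j < l.length → l.getD j 0 ≤ 1 + ascCount (l.take j)

/-- The set of ascent sequences of length `n` avoiding each pattern in `pats`. -/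
def AscentSeqSet (n : ℕ) (pats : List (List ℕ)) : Set (List ℕ) :=
  {l | l.length = n ∧ IsAscentSeq l ∧ ∀ p ∈ pats, ¬ SeqContains l p}

/-- `j` is a descent of `l` (0-indexed): `l j > l (j+1)`. -/
def IsDescent (l : List ℕ) (j : ℕ) : Prop :=
  j + 1 < l.length ∧ l.getD (j + 1) 0 < l.getD j 0

lemma seqContains_312_iff {l : List ℕ} :
    SeqContains l [3, 1, 2] ↔ ∃ x y z, [x, y, z].Sublist l ∧ y < z ∧ z < x := by
  constructor
  · rintro ⟨γ, hsub, hlen, horder⟩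
    obtain ⟨x, y, z, rfl⟩ := List.length_eq_three.mp hlen
    exact ⟨x, y, z, hsub, (horder 1 2 (by simp) (by simp)).mpr (by simp),
      (horder 2 0 (by simp) (by simp)).mpr (by simp)⟩
  · rintro ⟨x, y, z, hsub, hyz, hzx⟩
    refine ⟨[x, y, z], hsub, rfl, fun i j hi hj => ?_⟩
    simp only [List.length_cons, List.length_nil] at hi hj
    interval_cases i <;> interval_cases j <;> simp <;> omega

lemma seqContains_321_of_sublist {l : List ℕ} {x y z : ℕ} (hsub : [x, y, z].Sublist l)
    (hyx : y < x) (hzy : z < y) : SeqContains l [3, 2, 1] := by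
  refine ⟨[x, y, z], hsub, rfl, fun i j hi hj => ?_⟩
  simp only [List.length_cons, List.length_nil] at hi hj
  interval_cases i <;> interval_cases j <;> simp <;> omega

lemma seqContains_3124_of_sublist {l : List ℕ} {x y z w : ℕ} (hsub : [x, y, z, w].Sublist l)
    (hyz : y < z) (hzx : z < x) (hxw : x < w) : SeqContains l [3, 1, 2, 4] := by
  refine ⟨[x, y, z, w], hsub, rfl, fun i j hi hj => ?_⟩
  simp only [List.length_cons, List.length_nil] at hi hj
  interval_cases i <;> interval_cases j <;> simp <;> omega

lemma List.triple_getElem_sublist {α : Type*} (l : List α) {a b c : ℕ} (hab : a < b)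
    (hbc : b < c) (hc : c < l.length) : [l[a], l[b], l[c]].Sublist l := by
  simpa using List.map_getElem_sublist (l := l)
    (is := [⟨a, by omega⟩, ⟨b, by omega⟩, ⟨c, hc⟩]) (by simp; omega)

lemma pairwise_le_of_forall_not_isDescent {l : List ℕ} (h : ∀ i, ¬ IsDescent l i) :
    l.Pairwise (· ≤ ·) := by
  refine List.isChain_iff_pairwise.mp (List.isChain_iff_getElem.mpr fun i hi => ?_)
  have := h i
  simp only [IsDescent, not_and, not_lt, List.getD_eq_getElem _ _ hi,
    List.getD_eq_getElem _ _ (Nat.lt_of_succ_lt hi)] at this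
  exact this hi

lemma exists_isDescent_of_seqContains_312 {l : List ℕ} (h : SeqContains l [3, 1, 2]) :
    ∃ i, IsDescent l i := by
  obtain ⟨x, y, z, hsub, -, hzx⟩ := seqContains_312_iff.mp h
  by_contra! hasc
  have hxz : x ≤ z :=
    List.rel_of_pairwise_cons ((pairwise_le_of_forall_not_isDescent hasc).sublist hsub) (by simp)
  omega

lemma exists_greatest_isDescent {l : List ℕ} (h : ∃ i, IsDescent l i) :
    ∃ j, IsDescent l j ∧ ∀ i, IsDescent l i → i ≤ j := by
  classical
  obtain ⟨i, hi⟩ := h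
  have hbound : ∀ i, IsDescent l i → i ≤ l.length := fun i hi => by have := hi.1; omega
  exact ⟨_, Nat.findGreatest_spec (hbound i hi) hi,
    fun k hk => Nat.le_findGreatest (hbound k hk) hk⟩

lemma getElem_lt_of_getElem_eq_max {l : List ℕ} {m p i : ℕ} (hnd : l.Nodup)
    (hmax : ∀ a ∈ l, a ≤ m) (hp : p < l.length) (hpm : l[p] = m) (hi : i < l.length)
    (hip : i ≠ p) : l[i] < m := by
  have hne : l[i] ≠ l[p] := fun h => hip (hnd.getElem_inj_iff.mp h)
  have := hmax _ (List.getElem_mem hi)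
  omega

lemma isDescent_of_getElem_eq_max {l : List ℕ} {m p : ℕ} (hnd : l.Nodup)
    (hmax : ∀ a ∈ l, a ≤ m) (hp : p < l.length) (hpm : l[p] = m) (hp1 : p + 1 < l.length) :
    IsDescent l p := by
  refine ⟨hp1, ?_⟩
  rw [List.getD_eq_getElem _ _ hp1, List.getD_eq_getElem _ _ hp, hpm]
  exact getElem_lt_of_getElem_eq_max hnd hmax hp hpm hp1 (by omega)

lemma seqContains_3124_of_concat_max {l : List ℕ} {m : ℕ} (hlt : ∀ a ∈ l, a < m)
    (h : SeqContains (l ++ [m]) [3, 1, 2]) : SeqContains (l ++ [m]) [3, 1, 2, 4] := by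
  obtain ⟨x, y, z, hsub, hyz, hzx⟩ := seqContains_312_iff.mp h
  obtain ⟨γ, rest, hγ, hγl, hrest⟩ := List.sublist_append_iff.mp hsub
  rcases List.sublist_singleton.mp hrest with rfl | rfl
  · rw [List.append_nil] at hγ
    subst hγ
    exact seqContains_3124_of_sublist (hγl.append (List.Sublist.refl [m])) hyz hzx
      (hlt x (hγl.subset (by simp)))
  · obtain ⟨rfl, hzm⟩ := List.append_inj' (show [x, y] ++ [z] = γ ++ [m] from hγ) rfl
    cases hzm
    have := hlt x (hγl.subset (by simp))
    omega

theorem exists_greatest_isDescent_getD_eq_max {l : List ℕ} {m : ℕ} (hnd : l.Nodup)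
    (hm : m ∈ l) (hmax : ∀ a ∈ l, a ≤ m) (h321 : ¬ SeqContains l [3, 2, 1])
    (h3124 : ¬ SeqContains l [3, 1, 2, 4]) (h312 : SeqContains l [3, 1, 2]) :
    ∃ j, IsDescent l j ∧ (∀ i, IsDescent l i → i ≤ j) ∧ l.getD j 0 = m := by
  obtain ⟨j, hj, hj_greatest⟩ :=
    exists_greatest_isDescent (exists_isDescent_of_seqContains_312 h312)
  obtain ⟨p, hp, hpm⟩ := List.getElem_of_mem hm
  refine ⟨j, hj, hj_greatest, ?_⟩
  obtain ⟨hj1, hj_desc⟩ := hj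
  rw [List.getD_eq_getElem _ _ hj1, List.getD_eq_getElem _ _ (by omega)] at hj_desc
  rcases lt_trichotomy p j with hpj | rfl | hjp
  · have hsub := l.triple_getElem_sublist hpj j.lt_succ_self hj1
    rw [hpm] at hsub
    have hjm : l[j] < m := getElem_lt_of_getElem_eq_max hnd hmax hp hpm _ (by omega)
    exact absurd (seqContains_321_of_sublist hsub hjm hj_desc) h321
  · exact (List.getD_eq_getElem _ _ hp).trans hpm
  · have hp_last : p = l.length - 1 := by
      by_contra hne
      have := hj_greatest p (isDescent_of_getElem_eq_max hnd hmax hp hpm (by omega))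
      omega
    have hl_ne : l ≠ [] := List.ne_nil_of_mem hm
    have hsplit : l.dropLast ++ [m] = l := by
      subst hp_last
      rw [← hpm, ← List.getLast_eq_getElem hl_ne, List.dropLast_append_getLast]
    have hlt : ∀ a ∈ l.dropLast, a < m := by
      rw [← hsplit, List.nodup_append] at hnd
      exact fun a ha => lt_of_le_of_ne (hmax a (List.dropLast_subset l ha))
        (hnd.2.2 a ha m (List.mem_singleton_self m))
    rw [← hsplit] at h312 h3124
    exact absurd (seqContains_3124_of_concat_max hlt h312) h3124

/-- Suppose `n ≥ 3` and `π ∈ F_n(321, 3124)` contains the pattern 312.  Then `π` has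
a descent, and the left entry of the rightmost descent of `π` equals `n`. -/
theorem stmt17 (n : ℕ) (hn : 3 ≤ n) (π : List ℕ)
    (hπ : π ∈ FishburnSet n [[3, 2, 1], [3, 1, 2, 4]])
    (h312 : SeqContains π [3, 1, 2]) :
    ∃ j, IsDescent π j ∧ (∀ i, IsDescent π i → i ≤ j) ∧ π.getD j 0 = n := by
  obtain ⟨hperm, -, havoid⟩ := hπ
  have hmem : ∀ a, a ∈ π ↔ 1 ≤ a ∧ a < 1 + n := fun a => by
    rw [hperm.mem_iff, List.mem_range'_1]
  exact exists_greatest_isDescent_getD_eq_max (hperm.nodup_iff.mpr List.nodup_range')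
    ((hmem n).mpr (by omega)) (fun a ha => by have := (hmem a).mp ha; omega)
    (havoid _ (by simp)) (havoid _ (by simp)) h312
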